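/- Let G be a Garside group with positive monoid G⁺ and Garside element Δ, let g ∈ G and n ≥ 1. Suppose r is the greatest element of the set {t ∈ ℤ : Δ^t ≤_L h for some conjugate h of g} and m is the greatest element of the set {t ∈ ℤ : Δ^t ≤_L h for some conjugate h of gⁿ}. Then n·r ≤ m < n·r + n (equivalently, inf_s(g) ≤ inf_s(gⁿ)/n < inf_s(g) + 1). -/

import Mathlib

/-- `a` left-divides `b` in the monoid `M`. -/
def dvdL {M : Type*} [Monoid M] (a b : M) : Prop := ∃ c, a * c = b

/-- `a` right-divides `b` in the monoid `M`. -/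
def dvdR {M : Type*} [Monoid M] (a b : M) : Prop := ∃ c, c * a = b

/-- `L(a)`, the set of left divisors of `a`. -/
def Lset {M : Type*} [Monoid M] (a : M) : Set M := {x | dvdL x a}

/-- `R(a)`, the set of right divisors of `a`. -/
def Rset {M : Type*} [Monoid M] (a : M) : Set M := {x | dvdR x a}

/-- `a` is an atom: `a ≠ 1` and `a = b * c` implies `b = 1` or `c = 1`. -/
def IsAtomElt {M : Type*} [Monoid M] (a : M) : Prop :=
  a ≠ 1 ∧ ∀ b c : M, a = b * c → b = 1 ∨ c = 1

/-- `M` is atomic: every element is a finite product of atoms, and the lengths of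
expressions of a given element as products of atoms are bounded above. -/
def Atomic (M : Type*) [Monoid M] : Prop :=
  (∀ a : M, ∃ l : List M, (∀ x ∈ l, IsAtomElt x) ∧ l.prod = a) ∧
  (∀ a : M, ∃ N : ℕ, ∀ l : List M, (∀ x ∈ l, IsAtomElt x) → l.prod = a → l.length ≤ N)

/-- `Δ` is a Garside element: `L(Δ) = R(Δ)` and `L(Δ)` generates `M`. -/
def IsGarsideElt {M : Type*} [Monoid M] (Δ : M) : Prop :=
  Lset Δ = Rset Δ ∧ Submonoid.closure (Lset Δ) = ⊤

/-- `d` is a greatest common lower bound of `a` and `b` with respect to `≤_L`. -/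
def IsGlbL {M : Type*} [Monoid M] (a b d : M) : Prop :=
  dvdL d a ∧ dvdL d b ∧ ∀ c : M, dvdL c a → dvdL c b → dvdL c d

/-- `d` is a least common upper bound of `a` and `b` with respect to `≤_L`. -/
def IsLubL {M : Type*} [Monoid M] (a b d : M) : Prop :=
  dvdL a d ∧ dvdL b d ∧ ∀ c : M, dvdL a c → dvdL b c → dvdL d c

/-- `d` is a greatest common lower bound of `a` and `b` with respect to `≤_R`. -/
def IsGlbR {M : Type*} [Monoid M] (a b d : M) : Prop :=
  dvdR d a ∧ dvdR d b ∧ ∀ c : M, dvdR c a → dvdR c b → dvdR c d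

/-- `d` is a least common upper bound of `a` and `b` with respect to `≤_R`. -/
def IsLubR {M : Type*} [Monoid M] (a b d : M) : Prop :=
  dvdR a d ∧ dvdR b d ∧ ∀ c : M, dvdR a c → dvdR b c → dvdR d c

/-- `M` is a Garside monoid: finitely generated, left and right cancellative, atomic,
`≤_L`- and `≤_R`-lattice conditions, and it possesses a Garside element. -/
def IsGarsideMonoid (M : Type*) [Monoid M] : Prop :=
  (∃ S : Set M, S.Finite ∧ Submonoid.closure S = ⊤) ∧
  (∀ a b c : M, a * b = a * c → b = c) ∧
  (∀ a b c : M, b * a = c * a → b = c) ∧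
  Atomic M ∧
  (∀ a b : M, ∃ d, IsGlbL a b d) ∧
  (∀ a b : M, ∃ d, IsLubL a b d) ∧
  (∀ a b : M, ∃ d, IsGlbR a b d) ∧
  (∀ a b : M, ∃ d, IsLubR a b d) ∧
  (∃ Δ : M, IsGarsideElt Δ)

/-- Group-level left divisibility: `a ≤_L b` iff `a⁻¹ * b` is positive. -/
def gdvdL {G : Type*} [Group G] (P : Submonoid G) (a b : G) : Prop := a⁻¹ * b ∈ P

/-- Group-level right divisibility: `a ≤_R b` iff `b * a⁻¹` is positive. -/
def gdvdR {G : Type*} [Group G] (P : Submonoid G) (a b : G) : Prop := b * a⁻¹ ∈ P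

/-- `G` is a Garside group with positive monoid `P` and chosen Garside element `Δ`:
`P` is a Garside monoid, every element of `G` is a fraction `a * b⁻¹` of positive
elements, and `Δ` is a Garside element of `P`. -/
def IsGarsideGroup {G : Type*} [Group G] (P : Submonoid G) (Δ : G) : Prop :=
  IsGarsideMonoid P ∧
  (∀ g : G, ∃ a b : P, g = (a : G) * (b : G)⁻¹) ∧
  ∃ hΔ : Δ ∈ P, IsGarsideElt (⟨Δ, hΔ⟩ : P)

/-! Conjugation by `Δ` preserves `G⁺`, so `Δ ^ t ≤_L x` and `Δ ^ u ≤_L y` give `Δ ^ (t + u) ≤_L x * y`;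
this yields `n * r ≤ m`. For the upper bound, suppose `Δ ^ (n * s) ≤_L yⁿ` with `s = r + 1`, and let
`x` be the `≤_L`-meet in `G` of `aᵢ = yⁱ * Δ ^ (-i * s)` for `i < n` (meets in `G` come from meets
in `G⁺`, since every element is a power of `Δ` times a positive element). Then `x ≤_L 1` and
`y⁻¹ * x * Δ ^ s ≤_L aᵢ` for every `i`, hence `y⁻¹ * x * Δ ^ s ≤_L x`, i.e. `Δ ^ s ≤_L x⁻¹ * y * x`,
contradicting the maximality of `r`. -/

section Divisibility

variable {G : Type*} [Group G] {P : Submonoid G}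

theorem gdvdL_refl (a : G) : gdvdL P a a := by
  simp [gdvdL, P.one_mem]

theorem gdvdL_trans {a b c : G} (hab : gdvdL P a b) (hbc : gdvdL P b c) : gdvdL P a c := by
  simpa [gdvdL, mul_assoc] using P.mul_mem hab hbc

theorem gdvdL_mul_left_iff (u a b : G) : gdvdL P (u * a) (u * b) ↔ gdvdL P a b := by
  simp [gdvdL, mul_assoc]

theorem one_gdvdL_iff (a : G) : gdvdL P 1 a ↔ a ∈ P := by
  simp [gdvdL]

theorem dvdL_iff_gdvdL {a b : P} : dvdL a b ↔ gdvdL P a b := by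
  constructor
  · rintro ⟨c, rfl⟩
    simp [gdvdL]
  · intro h
    exact ⟨⟨_, h⟩, Subtype.ext (mul_inv_cancel_left (a : G) b)⟩

theorem dvdR_iff_gdvdR {a b : P} : dvdR a b ↔ gdvdR P a b := by
  constructor
  · rintro ⟨c, rfl⟩
    simp [gdvdR]
  · intro h
    exact ⟨⟨_, h⟩, Subtype.ext (inv_mul_cancel_right (b : G) a)⟩

theorem mem_Lset_iff {a x : P} : x ∈ Lset a ↔ (x : G)⁻¹ * a ∈ P := dvdL_iff_gdvdL

theorem mem_Rset_iff {a x : P} : x ∈ Rset a ↔ (a : G) * (x : G)⁻¹ ∈ P := dvdR_iff_gdvdR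

theorem map_mem_of_closure_eq_top {S : Set P} (hS : Submonoid.closure S = ⊤) (f : G →* G)
    (hf : ∀ s ∈ S, f s ∈ P) {p : G} (hp : p ∈ P) : f p ∈ P :=
  (Submonoid.closure_le (S := (P.comap f).comap P.subtype)).mpr hf
    (hS ▸ Submonoid.mem_top (⟨p, hp⟩ : P))

theorem zpow_conj_mem_iff {u : G} (hu : ∀ p, u * p * u⁻¹ ∈ P ↔ p ∈ P) (k : ℤ) (p : G) :
    u ^ k * p * (u ^ k)⁻¹ ∈ P ↔ p ∈ P := by
  induction k using Int.induction_on with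
  | zero => simp
  | succ k ih =>
    rw [show u ^ ((k : ℤ) + 1) * p * (u ^ ((k : ℤ) + 1))⁻¹ =
      u * (u ^ (k : ℤ) * p * (u ^ (k : ℤ))⁻¹) * u⁻¹ by group, hu, ih]
  | pred k ih =>
    rw [← ih, ← hu (u ^ (-(k : ℤ) - 1) * p * (u ^ (-(k : ℤ) - 1))⁻¹),
      show u * (u ^ (-(k : ℤ) - 1) * p * (u ^ (-(k : ℤ) - 1))⁻¹) * u⁻¹ =
        u ^ (-(k : ℤ)) * p * (u ^ (-(k : ℤ)))⁻¹ by group]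

def IsMeetL (P : Submonoid G) (s : Set G) (d : G) : Prop :=
  (∀ a ∈ s, gdvdL P d a) ∧ ∀ c, (∀ a ∈ s, gdvdL P c a) → gdvdL P c d

theorem isMeetL_singleton (a : G) : IsMeetL P {a} a := by
  simp [IsMeetL, gdvdL_refl]

theorem IsMeetL.insert {s : Set G} {a d e : G} (hs : IsMeetL P s d) (he : IsMeetL P {a, d} e) :
    IsMeetL P (insert a s) e := by
  simp only [IsMeetL, Set.forall_mem_insert, Set.mem_singleton_iff, forall_eq] at *
  refine ⟨⟨he.1.1, fun b hb => gdvdL_trans he.1.2 (hs.1 b hb)⟩, fun c hc => ?_⟩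
  exact he.2 c ⟨hc.1, hs.2 c hc.2⟩

theorem IsMeetL.mul_left {s : Set G} {d : G} (h : IsMeetL P s d) (u : G) :
    IsMeetL P ((u * ·) '' s) (u * d) := by
  refine ⟨?_, fun c hc => ?_⟩
  · rintro _ ⟨a, ha, rfl⟩
    exact (gdvdL_mul_left_iff u d a).2 (h.1 a ha)
  · have hlow : gdvdL P (u⁻¹ * c) d := h.2 _ fun a ha => by
      simpa using (gdvdL_mul_left_iff u⁻¹ c (u * a)).2 (hc _ ⟨a, ha, rfl⟩)
    simpa using (gdvdL_mul_left_iff u _ _).2 hlow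

theorem exists_gdvdL_glb_of_mem (hglb : ∀ a b : P, ∃ d, IsGlbL a b d) {a b : G}
    (ha : a ∈ P) (hb : b ∈ P) :
    ∃ d ∈ P, gdvdL P d a ∧ gdvdL P d b ∧
      ∀ c ∈ P, gdvdL P c a → gdvdL P c b → gdvdL P c d := by
  obtain ⟨d, hda, hdb, hd⟩ := hglb ⟨a, ha⟩ ⟨b, hb⟩
  exact ⟨d, d.2, dvdL_iff_gdvdL.1 hda, dvdL_iff_gdvdL.1 hdb, fun c hc hca hcb =>
    dvdL_iff_gdvdL.1 (hd ⟨c, hc⟩ (dvdL_iff_gdvdL.2 hca) (dvdL_iff_gdvdL.2 hcb))⟩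

end Divisibility

section GarsideElement

variable {G : Type*} [Group G] {P : Submonoid G} {Δ : G} {hΔ : Δ ∈ P}

theorem IsGarsideElt.conj_mem_iff (h : IsGarsideElt (⟨Δ, hΔ⟩ : P)) (p : G) :
    Δ * p * Δ⁻¹ ∈ P ↔ p ∈ P := by
  -- `L(Δ) = R(Δ)` makes both `x ↦ Δ⁻¹ * x * Δ = (x⁻¹ * Δ)⁻¹ * Δ` and `x ↦ Δ * x * Δ⁻¹` send
  -- simple elements to simple elements, and the simple elements generate `G⁺`.
  obtain ⟨hLR, hcl⟩ := h
  constructor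
  · intro hp
    have hmap : Δ⁻¹ * (Δ * p * Δ⁻¹) * Δ⁻¹⁻¹ ∈ P := by
      refine map_mem_of_closure_eq_top hcl (MulAut.conj Δ⁻¹).toMonoidHom (fun x hx => ?_) hp
      have hc : (⟨(x : G)⁻¹ * Δ, mem_Lset_iff.1 hx⟩ : P) ∈ Rset (⟨Δ, hΔ⟩ : P) :=
        mem_Rset_iff.2 (by simp)
      rw [← hLR] at hc
      simpa [mul_assoc] using mem_Lset_iff.1 hc
    simpa [mul_assoc] using hmap
  · intro hp
    refine map_mem_of_closure_eq_top hcl (MulAut.conj Δ).toMonoidHom (fun x hx => ?_) hp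
    rw [hLR] at hx
    have hc : (⟨Δ * (x : G)⁻¹, mem_Rset_iff.1 hx⟩ : P) ∈ Lset (⟨Δ, hΔ⟩ : P) :=
      mem_Lset_iff.2 (by simp)
    rw [hLR] at hc
    simpa [mul_assoc] using mem_Rset_iff.1 hc

end GarsideElement

namespace IsGarsideGroup

variable {G : Type*} [Group G] {P : Submonoid G} {Δ : G}

theorem delta_mem (hG : IsGarsideGroup P Δ) : Δ ∈ P := hG.2.2.1

theorem zpow_conj_mem_iff (hG : IsGarsideGroup P Δ) (k : ℤ) (p : G) :
    Δ ^ k * p * (Δ ^ k)⁻¹ ∈ P ↔ p ∈ P := by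
  obtain ⟨-, -, _, hΔ⟩ := hG
  exact _root_.zpow_conj_mem_iff hΔ.conj_mem_iff k p

theorem gdvdL_mul_zpow_iff (hG : IsGarsideGroup P Δ) (k : ℤ) (a b : G) :
    gdvdL P (a * Δ ^ k) (b * Δ ^ k) ↔ gdvdL P a b := by
  rw [gdvdL, gdvdL,
    show (a * Δ ^ k)⁻¹ * (b * Δ ^ k) = Δ ^ (-k) * (a⁻¹ * b) * (Δ ^ (-k))⁻¹ by group]
  exact hG.zpow_conj_mem_iff (-k) _

theorem zpow_mem (hG : IsGarsideGroup P Δ) {t : ℤ} (ht : 0 ≤ t) : Δ ^ t ∈ P := by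
  lift t to ℕ using ht
  simpa using pow_mem hG.delta_mem t

theorem zpow_gdvdL_zpow (hG : IsGarsideGroup P Δ) {s t : ℤ} (hst : s ≤ t) :
    gdvdL P (Δ ^ s) (Δ ^ t) := by
  rw [gdvdL, ← zpow_neg, ← zpow_add]
  exact hG.zpow_mem (by omega)

theorem zpow_gdvdL_mul (hG : IsGarsideGroup P Δ) {s t : ℤ} {x y : G}
    (hx : gdvdL P (Δ ^ s) x) (hy : gdvdL P (Δ ^ t) y) : gdvdL P (Δ ^ (s + t)) (x * y) := by
  rw [gdvdL, show (Δ ^ (s + t))⁻¹ * (x * y) =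
    Δ ^ (-t) * ((Δ ^ s)⁻¹ * x) * (Δ ^ (-t))⁻¹ * ((Δ ^ t)⁻¹ * y) by group]
  exact P.mul_mem ((hG.zpow_conj_mem_iff (-t) _).2 hx) hy

theorem zpow_gdvdL_pow (hG : IsGarsideGroup P Δ) {t : ℤ} {x : G} (hx : gdvdL P (Δ ^ t) x)
    (n : ℕ) : gdvdL P (Δ ^ ((n : ℤ) * t)) (x ^ n) := by
  induction n with
  | zero => simpa using gdvdL_refl (P := P) 1
  | succ n ih =>
    rw [pow_succ, Nat.cast_succ, add_one_mul]
    exact hG.zpow_gdvdL_mul ih hx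

theorem exists_gdvdL_zpow_of_mem (hG : IsGarsideGroup P Δ) {p : G} (hp : p ∈ P) :
    ∃ t : ℤ, gdvdL P p (Δ ^ t) := by
  obtain ⟨hΔ, -, hcl⟩ := hG.2.2
  have hmem : (⟨p, hp⟩ : P) ∈ Submonoid.closure (Lset (⟨Δ, hΔ⟩ : P)) :=
    hcl ▸ Submonoid.mem_top _
  change ∃ t : ℤ, gdvdL P ((⟨p, hp⟩ : P) : G) (Δ ^ t)
  generalize (⟨p, hp⟩ : P) = q at hmem ⊢
  induction hmem using Submonoid.closure_induction with
  | mem x hx => exact ⟨1, by simpa [gdvdL] using mem_Lset_iff.1 hx⟩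
  | one => exact ⟨0, by simpa using gdvdL_refl (P := P) 1⟩
  | mul a b _ _ ha hb =>
    obtain ⟨s, hs⟩ := ha
    obtain ⟨t, ht⟩ := hb
    refine ⟨s + t, gdvdL_trans ((gdvdL_mul_left_iff _ _ _).2 ht) ?_⟩
    rw [zpow_add]
    exact (hG.gdvdL_mul_zpow_iff t _ _).2 hs

theorem exists_zpow_gdvdL (hG : IsGarsideGroup P Δ) (g : G) : ∃ t : ℤ, gdvdL P (Δ ^ t) g := by
  obtain ⟨a, b, rfl⟩ := hG.2.1 g
  obtain ⟨t, ht⟩ := hG.exists_gdvdL_zpow_of_mem b.2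
  refine ⟨-t, ?_⟩
  rw [gdvdL, show (Δ ^ (-t))⁻¹ * (a * (b : G)⁻¹) =
    Δ ^ t * (a * ((b : G)⁻¹ * Δ ^ t)) * (Δ ^ t)⁻¹ by group, hG.zpow_conj_mem_iff]
  exact P.mul_mem a.2 ht

theorem exists_isMeetL_pair_of_mem (hG : IsGarsideGroup P Δ) {a b : G} (ha : a ∈ P)
    (hb : b ∈ P) : ∃ d, IsMeetL P {a, b} d := by
  have hglb := hG.1.2.2.2.2.1
  obtain ⟨d, -, hda, hdb, hd⟩ := exists_gdvdL_glb_of_mem hglb ha hb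
  refine ⟨d, by simp [hda, hdb], fun c hc => ?_⟩
  obtain ⟨hca, hcb⟩ : gdvdL P c a ∧ gdvdL P c b := ⟨hc a (by simp), hc b (by simp)⟩
  -- `c` need not be positive: multiplying by `e` moves it into `G⁺`, where the meet of
  -- `e * a` and `e * b` lies below `e * d`.
  obtain ⟨t, ht⟩ := hG.exists_zpow_gdvdL c
  set e := Δ ^ (-min t 0)
  have he : e ∈ P := hG.zpow_mem (by omega)
  have hec : e * c ∈ P := by
    rw [← one_gdvdL_iff, ← mul_inv_cancel e, ← gdvdL_mul_left_iff e⁻¹]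
    simpa [e] using gdvdL_trans (hG.zpow_gdvdL_zpow (min_le_left t 0)) ht
  obtain ⟨d', -, hd'a, hd'b, hd'⟩ :=
    exists_gdvdL_glb_of_mem hglb (P.mul_mem he ha) (P.mul_mem he hb)
  have hed' : gdvdL P e d' := hd' e he (by simpa [gdvdL]) (by simpa [gdvdL])
  have hd'ed : gdvdL P d' (e * d) := by
    have := (gdvdL_mul_left_iff e _ _).2 <| hd _ hed'
      ((gdvdL_mul_left_iff e _ _).1 (by simpa using hd'a))
      ((gdvdL_mul_left_iff e _ _).1 (by simpa using hd'b))
    simpa using this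
  have hecd' : gdvdL P (e * c) d' :=
    hd' _ hec ((gdvdL_mul_left_iff e _ _).2 hca) ((gdvdL_mul_left_iff e _ _).2 hcb)
  exact (gdvdL_mul_left_iff e _ _).1 (gdvdL_trans hecd' hd'ed)

theorem exists_isMeetL_pair (hG : IsGarsideGroup P Δ) (a b : G) : ∃ d, IsMeetL P {a, b} d := by
  obtain ⟨s, hs⟩ := hG.exists_zpow_gdvdL a
  obtain ⟨t, ht⟩ := hG.exists_zpow_gdvdL b
  set u := Δ ^ min s t
  have hua : u⁻¹ * a ∈ P := gdvdL_trans (hG.zpow_gdvdL_zpow (min_le_left s t)) hs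
  have hub : u⁻¹ * b ∈ P := gdvdL_trans (hG.zpow_gdvdL_zpow (min_le_right s t)) ht
  obtain ⟨d, hd⟩ := hG.exists_isMeetL_pair_of_mem hua hub
  refine ⟨u * d, ?_⟩
  simpa [Set.image_pair] using hd.mul_left u

theorem exists_isMeetL (hG : IsGarsideGroup P Δ) {s : Finset G} (hs : s.Nonempty) :
    ∃ d, IsMeetL P s d := by
  induction hs using Finset.Nonempty.cons_induction with
  | singleton a => exact ⟨a, by simpa using isMeetL_singleton a⟩
  | cons a s _ _ ih =>
    obtain ⟨d, hd⟩ := ih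
    obtain ⟨e, he⟩ := hG.exists_isMeetL_pair a d
    exact ⟨e, by simpa using hd.insert he⟩

theorem exists_isConj_zpow_gdvdL (hG : IsGarsideGroup P Δ) {y : G} {n : ℕ} (hn : n ≠ 0)
    {s : ℤ} (h : gdvdL P (Δ ^ ((n : ℤ) * s)) (y ^ n)) : ∃ z, IsConj y z ∧ gdvdL P (Δ ^ s) z := by
  classical
  set a : ℕ → G := fun i => y ^ i * Δ ^ (-((i : ℤ) * s))
  obtain ⟨x, hx⟩ := hG.exists_isMeetL (s := (Finset.range n).image a) (by simpa using hn)
  have hxa : ∀ i < n, gdvdL P x (a i) := fun i hi => hx.1 _ (by simpa using ⟨i, hi, rfl⟩)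
  have hx1 : gdvdL P x 1 := by simpa [a] using hxa 0 (Nat.pos_of_ne_zero hn)
  have han : gdvdL P 1 (a n) := by
    simpa [a] using (hG.gdvdL_mul_zpow_iff (-((n : ℤ) * s)) _ _).2 h
  have hxa' : ∀ i < n, gdvdL P x (a (i + 1)) := by
    intro i hi
    rcases Nat.lt_or_ge (i + 1) n with hlt | hge
    · exact hxa _ hlt
    · obtain rfl : i + 1 = n := by omega
      exact gdvdL_trans hx1 han
  have hc : gdvdL P (y⁻¹ * x * Δ ^ s) x := hx.2 _ fun b hb => by
    obtain ⟨i, hi, rfl⟩ := Finset.mem_image.1 hb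
    rw [← gdvdL_mul_left_iff y, ← hG.gdvdL_mul_zpow_iff (-s)]
    convert hxa' i (Finset.mem_range.1 hi) using 1
    · group
    · simp only [a]
      push_cast
      group
  refine ⟨x⁻¹ * y * x, isConj_iff.2 ⟨x⁻¹, by group⟩, ?_⟩
  simpa [mul_assoc] using (gdvdL_mul_left_iff (x⁻¹ * y) _ _).2 hc

end IsGarsideGroup

/-- **Theorem 6.1 (1).** For a Garside group `G`, `g ∈ G` and `n ≥ 1`,
`inf_s(g) ≤ inf_s(gⁿ)/n < inf_s(g) + 1`, i.e. `n·inf_s(g) ≤ inf_s(gⁿ) < n·(inf_s(g)+1)`. -/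
theorem infs_pow {G : Type*} [Group G] (P : Submonoid G) (Δ : G)
    (hG : IsGarsideGroup P Δ) (g : G) (n : ℕ) (hn : 1 ≤ n) (r m : ℤ)
    (hr : IsGreatest {t : ℤ | ∃ h : G, IsConj g h ∧ gdvdL P (Δ ^ t) h} r)
    (hm : IsGreatest {t : ℤ | ∃ h : G, IsConj (g ^ n) h ∧ gdvdL P (Δ ^ t) h} m) :
    (n : ℤ) * r ≤ m ∧ m < (n : ℤ) * r + (n : ℤ) := by
  obtain ⟨h, hgh, hh⟩ := hr.1
  obtain ⟨h', hgh', hh'⟩ := hm.1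
  constructor
  · exact hm.2 ⟨h ^ n, hgh.pow n, hG.zpow_gdvdL_pow hh n⟩
  · by_contra! hle
    obtain ⟨c, rfl⟩ := isConj_iff.1 hgh'
    have hy : gdvdL P (Δ ^ ((n : ℤ) * (r + 1))) ((c * g * c⁻¹) ^ n) := by
      rw [conj_pow]
      exact gdvdL_trans (hG.zpow_gdvdL_zpow (by linarith)) hh'
    obtain ⟨z, hyz, hz⟩ := hG.exists_isConj_zpow_gdvdL (by omega) hy
    have := hr.2 ⟨z, (isConj_iff.2 ⟨c, rfl⟩).trans hyz, hz⟩
    omega
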